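/- arXiv:1306.0780 — 3 statements merged into one kernel-verified Lean document; each statement's English description precedes it below -/
import Mathlib

section
/- Existence of the regularized sum: Let f : [1,∞) → ℂ admit an asymptotic expansion f(x) ~ Σ_{j=1}^{N-1} Σ_{k=0}^{M_j} a_{jk} x^{α_j} log^k x + Σ_{k=0}^{M_0} a_{0k} log^k x + f_N(x) as x → ∞, with Re(α_j) decreasing and remainder f_N(x) = O(x^{-1-δ}) for some δ > 0. Then the partial sums Σ_{λ=1}^N f(λ) admit an asymptotic expansion of the same type in N, so that the regularized sum LIM_{N→∞} Σ_{λ=1}^N f(λ) exists. -/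
open MeasureTheory Filter Asymptotics

noncomputable section

/-- A term `x ^ α * (log x) ^ k` of a partie-finie asymptotic expansion. -/
def CTerm (p : ℂ × ℕ) (x : ℝ) : ℂ :=
  (x : ℂ) ^ p.1 * (Real.log x : ℂ) ^ p.2

/-- Hadamard partie finie regularized limit as `x → ∞`: `g` has an asymptotic expansion
`g(x) ~ ∑ A p * x ^ p.1 * log x ^ p.2 + c + o(1)` where all expansion terms are
non-decaying and non-constant; `c` is the constant term `a₀₀`. -/
def HasRegLimAtTop (g : ℝ → ℂ) (c : ℂ) : Prop :=
  ∃ (s : Finset (ℂ × ℕ)) (A : ℂ × ℕ → ℂ),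
    (∀ p ∈ s, 0 ≤ p.1.re ∧ p ≠ (0, 0)) ∧
    Tendsto (fun x => g x - ∑ p ∈ s, A p * CTerm p x - c) atTop (nhds 0)

/-- Hadamard partie finie regularized limit as `x → 0⁺`. -/
def HasRegLimAtZero (g : ℝ → ℂ) (c : ℂ) : Prop :=
  ∃ (s : Finset (ℂ × ℕ)) (A : ℂ × ℕ → ℂ),
    (∀ p ∈ s, p.1.re ≤ 0 ∧ p ≠ (0, 0)) ∧
    Tendsto (fun x => g x - ∑ p ∈ s, A p * CTerm p x - c) (nhdsWithin 0 (Set.Ioi 0)) (nhds 0)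

/-- `⨍_a^∞ g = v` : the regularized integral of `g` from `a` to `∞` equals `v`.
For `a ≠ 0` it is `LIM_{R→∞} ∫_a^R g`; for `a = 0` one additionally regularizes at the
lower endpoint: `⨍_0^∞ g = LIM_{ε→0} ∫_ε^1 g + LIM_{R→∞} ∫_1^R g`. -/
def HasRegInt (g : ℝ → ℂ) (a : ℝ) (v : ℂ) : Prop :=
  (a ≠ 0 ∧ HasRegLimAtTop (fun R => ∫ x in a..R, g x) v) ∨
  (a = 0 ∧ ∃ v₀ v₁ : ℂ,
    HasRegLimAtZero (fun e => ∫ x in e..1, g x) v₀ ∧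
    HasRegLimAtTop (fun R => ∫ x in (1:ℝ)..R, g x) v₁ ∧ v = v₀ + v₁)

/-- Regularized limit of a sequence (partie finie of the expansion in `N`). -/
def HasRegLimSeq (g : ℕ → ℂ) (c : ℂ) : Prop :=
  ∃ (s : Finset (ℂ × ℕ)) (A : ℂ × ℕ → ℂ),
    (∀ p ∈ s, 0 ≤ p.1.re ∧ p ≠ (0, 0)) ∧
    Tendsto (fun N : ℕ => g N - ∑ p ∈ s, A p * CTerm p (N : ℝ) - c) atTop (nhds 0)

/-- Regularized sum `Σ-reg_{l=l₀}^∞ g l = v`, the regularized limit of partial sums. -/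
def HasRegSum (g : ℕ → ℂ) (l₀ : ℕ) (v : ℂ) : Prop :=
  HasRegLimSeq (fun N => ∑ l ∈ Finset.Icc l₀ N, g l) v

/-- The closed quarter plane minus the origin. -/
def Qset : Set (ℝ × ℝ) := {p | 0 ≤ p.1 ∧ 0 ≤ p.2} \ {0}

/-- Homogeneity of complex degree `α` on the quarter plane. -/
def Homog (f : ℝ × ℝ → ℂ) (α : ℂ) : Prop :=
  ∀ l : ℝ, 0 < l → ∀ p : ℝ × ℝ, p ∈ Qset →
    f (l * p.1, l * p.2) = (l : ℂ) ^ α * f p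

/-- Taylor coefficient `c_j = (∂₁^j f)(0,1)/j!` of the expansion of `f` as `y → ∞`. -/
def cCoef (f : ℝ × ℝ → ℂ) (j : ℕ) : ℂ :=
  (j.factorial : ℂ)⁻¹ * iteratedDerivWithin j (fun t => f (t, 1)) (Set.Ici 0) 0

/-- Taylor coefficient `d_j = (∂₂^j f)(1,0)/j!` of the expansion of `f` as `x → ∞`. -/
def dCoef (f : ℝ × ℝ → ℂ) (j : ℕ) : ℂ :=
  (j.factorial : ℂ)⁻¹ * iteratedDerivWithin j (fun t => f (1, t)) (Set.Ici 0) 0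

open Classical in
/-- `c_{α+1}`: the coefficient `c_j` with `j = α + 1` if `α + 1 ∈ ℕ`, and `0` otherwise. -/
def cCrit (f : ℝ × ℝ → ℂ) (α : ℂ) : ℂ :=
  if h : ∃ j : ℕ, α + 1 = (j : ℂ) then cCoef f h.choose else 0

open Classical in
/-- `d_{α+1}`: the coefficient `d_j` with `j = α + 1` if `α + 1 ∈ ℕ`, and `0` otherwise. -/
def dCrit (f : ℝ × ℝ → ℂ) (α : ℂ) : ℂ :=
  if h : ∃ j : ℕ, α + 1 = (j : ℂ) then dCoef f h.choose else 0

end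

/-!
Every term `f(x) = x ^ α * log x ^ k` is the derivative of a finite combination `H` of such
terms. Taylor's formula of order `n + 1` for `H` on `[l - 1, l]` writes `f(l)` as
`H(l) - H(l - 1)`, plus a combination of the derivatives `f^(j)(l)`, `j ≥ 1`, whose exponents
have smaller real part, plus a remainder `O(l ^ (Re α - n - 1) * log l ^ k)`, summable once
`n > Re α`. By induction on `⌈Re α⌉`, `f(l)` is therefore, up to a summable sequence, a difference
`G(l) - G(l - 1)` of such a combination `G`; so is the given function, whose remainder
`O(x ^ (-1 - δ))` is summable. Summing telescopes: the partial sums are `G(N)` plus a convergent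
sequence, and the terms of `G(N)` that decay or are constant only change the constant.
-/

open Finsupp Set Topology

noncomputable section

abbrev PowLog := (ℂ × ℕ) →₀ ℂ

def powLogEval (x : ℝ) : PowLog →ₗ[ℂ] ℂ :=
  linearCombination ℂ fun p => CTerm p x

def powLogDeriv : PowLog →ₗ[ℂ] PowLog :=
  linearCombination ℂ fun p => single (p.1 - 1, p.2) p.1 + single (p.1 - 1, p.2 - 1) (p.2 : ℂ)

lemma powLogEval_single (x : ℝ) (p : ℂ × ℕ) (a : ℂ) :
    powLogEval x (single p a) = a * CTerm p x := by
  simp [powLogEval]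

lemma powLogDeriv_single (p : ℂ × ℕ) (a : ℂ) :
    powLogDeriv (single p a) =
      single (p.1 - 1, p.2) (a * p.1) + single (p.1 - 1, p.2 - 1) (a * p.2) := by
  simp [powLogDeriv]

lemma powLogEval_apply (x : ℝ) (A : PowLog) :
    powLogEval x A = ∑ p ∈ A.support, A p * CTerm p x := by
  simp [powLogEval, linearCombination_apply, Finsupp.sum]

lemma hasDerivAt_cterm (p : ℂ × ℕ) {x : ℝ} (hx : 0 < x) :
    HasDerivAt (CTerm p) (p.1 * CTerm (p.1 - 1, p.2) x + p.2 * CTerm (p.1 - 1, p.2 - 1) x) x := by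
  have hpow : HasDerivAt (fun y : ℝ => (y : ℂ) ^ p.1) (p.1 * (x : ℂ) ^ (p.1 - 1)) x := by
    rcases eq_or_ne p.1 0 with h | h
    · simp only [h, Complex.cpow_zero, zero_mul]; exact hasDerivAt_const x 1
    · exact hasDerivAt_ofReal_cpow_const hx.ne' h
  have hlog : HasDerivAt (fun y : ℝ => (Real.log y : ℂ) ^ p.2)
      (p.2 * (Real.log x : ℂ) ^ (p.2 - 1) * (x : ℂ)⁻¹) x := by
    simpa using ((Real.hasDerivAt_log hx.ne').ofReal_comp.fun_pow p.2)
  have hx' : (x : ℂ) ^ (p.1 - 1) = (x : ℂ) ^ p.1 * (x : ℂ)⁻¹ := by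
    rw [Complex.cpow_sub _ _ (by exact_mod_cast hx.ne'), Complex.cpow_one, div_eq_mul_inv]
  refine (hpow.mul hlog).congr_deriv ?_
  simp only [CTerm, hx']
  ring

lemma hasDerivAt_powLogEval (A : PowLog) {x : ℝ} (hx : 0 < x) :
    HasDerivAt (fun y => powLogEval y A) (powLogEval x (powLogDeriv A)) x := by
  induction A using Finsupp.induction_linear with
  | zero => simpa using hasDerivAt_const x (0 : ℂ)
  | add A B hA hB => simpa using hA.fun_add hB
  | single p a =>
    simp only [powLogEval_single, powLogDeriv_single, map_add]
    refine ((hasDerivAt_cterm p hx).const_mul a).congr_deriv ?_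
    ring

lemma contDiffOn_powLogEval (n : ℕ) (A : PowLog) :
    ContDiffOn ℝ n (fun y => powLogEval y A) (Ioi 0) := by
  induction n generalizing A with
  | zero =>
    exact contDiffOn_zero.2 fun x hx =>
      (hasDerivAt_powLogEval A hx).continuousAt.continuousWithinAt
  | succ n ih =>
    rw [Nat.cast_succ, contDiffOn_succ_iff_deriv_of_isOpen isOpen_Ioi]
    refine ⟨fun x hx => (hasDerivAt_powLogEval A hx).differentiableAt.differentiableWithinAt,
      by simp, (ih (powLogDeriv A)).congr fun x hx => (hasDerivAt_powLogEval A hx).deriv⟩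

lemma iteratedDerivWithin_powLogEval {s : Set ℝ} (hs : UniqueDiffOn ℝ s) (hpos : s ⊆ Ioi 0)
    (A : PowLog) (j : ℕ) :
    EqOn (iteratedDerivWithin j (fun y => powLogEval y A) s)
      (fun y => powLogEval y (powLogDeriv^[j] A)) s := by
  induction j with
  | zero => intro x _; simp
  | succ j ih =>
    intro x hx
    rw [iteratedDerivWithin_succ, derivWithin_congr ih (ih hx), Function.iterate_succ_apply']
    exact ((hasDerivAt_powLogEval _ (hpos hx)).hasDerivWithinAt).derivWithin (hs x hx)

lemma powLogEval_taylor_integral_remainder (H : PowLog) {a b : ℝ} (ha : 0 < a) (hb : 0 < b)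
    (hab : a ≠ b) (n : ℕ) :
    powLogEval a H - ∑ j ∈ Finset.range (n + 1),
        ((j.factorial : ℝ)⁻¹ * (a - b) ^ j) • powLogEval b (powLogDeriv^[j] H) =
      ∫ t in b..a, ((a - t) ^ n / n.factorial) • powLogEval t (powLogDeriv^[n + 1] H) := by
  have hpos : uIcc b a ⊆ Ioi 0 := fun t ht => lt_of_lt_of_le (lt_min hb ha) ht.1
  have hs : UniqueDiffOn ℝ (uIcc b a) := uniqueDiffOn_uIcc hab.symm
  have hderiv := iteratedDerivWithin_powLogEval hs hpos H
  have key := taylor_integral_remainder ((contDiffOn_powLogEval (n + 1) H).mono hpos)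
  rw [taylor_within_apply] at key
  refine Eq.trans ?_ (key.trans ?_)
  · refine congrArg _ (Finset.sum_congr rfl fun j _ => ?_)
    rw [hderiv j left_mem_uIcc]
  · refine intervalIntegral.integral_congr fun t ht => ?_
    simp only [hderiv (n + 1) ht]

lemma powLogDeriv_mem_supported {σ : ℝ} {A : PowLog}
    (hA : A ∈ supported ℂ ℂ {p : ℂ × ℕ | p.1.re < σ}) :
    powLogDeriv A ∈ supported ℂ ℂ {p : ℂ × ℕ | p.1.re < σ - 1} := by
  suffices supported ℂ ℂ {p : ℂ × ℕ | p.1.re < σ} ≤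
      (supported ℂ ℂ {p : ℂ × ℕ | p.1.re < σ - 1}).comap powLogDeriv from this hA
  rw [supported_eq_span_single, Submodule.span_le]
  rintro _ ⟨p, hp, rfl⟩
  have hre : (p.1 - 1, p.2).1.re < σ - 1 := by simpa using hp
  have hre' : (p.1 - 1, p.2 - 1).1.re < σ - 1 := hre
  rw [SetLike.mem_coe, Submodule.mem_comap, powLogDeriv_single]
  exact add_mem (single_mem_supported ℂ _ hre) (single_mem_supported ℂ _ hre')

lemma powLogDeriv_iterate_mem_supported {σ : ℝ} {A : PowLog}
    (hA : A ∈ supported ℂ ℂ {p : ℂ × ℕ | p.1.re < σ}) (j : ℕ) :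
    powLogDeriv^[j] A ∈ supported ℂ ℂ {p : ℂ × ℕ | p.1.re < σ - j} := by
  induction j with
  | zero => simpa using hA
  | succ j ih =>
    rw [Function.iterate_succ_apply', Nat.cast_succ, ← sub_sub]
    exact powLogDeriv_mem_supported ih

lemma exists_powLogDeriv_eq_single (α : ℂ) (k : ℕ) :
    ∃ H : PowLog, powLogDeriv H = single (α, k) 1 := by
  rcases eq_or_ne α (-1) with rfl | hα
  · refine ⟨single (0, k + 1) ((k + 1 : ℂ)⁻¹), ?_⟩
    have hk : (k + 1 : ℂ) ≠ 0 := Nat.cast_add_one_ne_zero k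
    rw [powLogDeriv_single, mul_zero, single_zero, zero_add, zero_sub, Nat.add_sub_cancel,
      Nat.cast_succ, inv_mul_cancel₀ hk]
  have hα1 : α + 1 ≠ 0 := fun h => hα (eq_neg_of_add_eq_zero_left h)
  induction k with
  | zero =>
    refine ⟨single (α + 1, 0) (α + 1)⁻¹, ?_⟩
    simp [powLogDeriv_single, inv_mul_cancel₀ hα1]
  | succ k ih =>
    obtain ⟨H, hH⟩ := ih
    refine ⟨single (α + 1, k + 1) (α + 1)⁻¹ - ((k + 1 : ℂ) / (α + 1)) • H, ?_⟩
    rw [map_sub, map_smul, hH, powLogDeriv_single]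
    simp only [add_sub_cancel_right, Nat.add_sub_cancel, Nat.cast_add, Nat.cast_one,
      inv_mul_cancel₀ hα1, smul_single, smul_eq_mul, mul_one]
    rw [add_sub_assoc, ← single_sub, div_eq_inv_mul, sub_self, single_zero, add_zero]

lemma powLogDeriv_surjective : Function.Surjective powLogDeriv := by
  rw [← LinearMap.range_eq_top, eq_top_iff, ← supported_univ, supported_eq_span_single,
    Submodule.span_le]
  rintro _ ⟨⟨α, k⟩, -, rfl⟩
  exact exists_powLogDeriv_eq_single α k

lemma norm_cterm {p : ℂ × ℕ} {x : ℝ} (hx : 1 ≤ x) :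
    ‖CTerm p x‖ = x ^ p.1.re * Real.log x ^ p.2 := by
  rw [CTerm, norm_mul, norm_pow, Complex.norm_cpow_eq_rpow_re_of_pos (by linarith),
    Complex.norm_real, Real.norm_of_nonneg (Real.log_nonneg hx)]

lemma isLittleO_rpow_mul_log_pow (σ : ℝ) {ε : ℝ} (hε : 0 < ε) (k : ℕ) :
    (fun x : ℝ => x ^ σ * Real.log x ^ k) =o[atTop] fun x => x ^ (σ + ε) := by
  have hlog : (fun x : ℝ => Real.log x ^ k) =o[atTop] fun x => x ^ ε := by
    simpa using isLittleO_log_rpow_rpow_atTop (k : ℝ) hε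
  refine ((isBigO_refl (fun x : ℝ => x ^ σ) atTop).mul_isLittleO hlog).congr' .rfl ?_
  filter_upwards [eventually_gt_atTop 0] with x hx using (Real.rpow_add hx σ ε).symm

lemma tendsto_cterm_atTop_zero {p : ℂ × ℕ} (hp : p.1.re < 0) :
    Tendsto (CTerm p) atTop (𝓝 0) := by
  have h := (isLittleO_rpow_mul_log_pow p.1.re (ε := -p.1.re / 2) (by linarith) p.2).isBigO
  refine tendsto_zero_iff_norm_tendsto_zero.2 (h.trans_tendsto ?_ |>.congr' ?_)
  · convert tendsto_rpow_neg_atTop (y := -p.1.re / 2) (by linarith) using 3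
    ring
  · filter_upwards [eventually_ge_atTop 1] with x hx using (norm_cterm hx).symm

lemma summable_rpow_mul_log_pow {σ : ℝ} (hσ : σ < -1) (k : ℕ) :
    Summable fun l : ℕ => (l : ℝ) ^ σ * Real.log l ^ k := by
  have h := (isLittleO_rpow_mul_log_pow σ (ε := (-1 - σ) / 2) (by linarith) k).isBigO
  exact summable_of_isBigO_nat (Real.summable_nat_rpow.2 (by linarith))
    (h.comp_tendsto tendsto_natCast_atTop_atTop)

lemma norm_cterm_le_of_mem_Icc {p : ℂ × ℕ} (hp : p.1.re ≤ 0) {x t : ℝ} (hx : 2 ≤ x)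
    (ht : t ∈ Icc (x - 1) x) :
    ‖CTerm p t‖ ≤ 2 ^ (-p.1.re) * (x ^ p.1.re * Real.log x ^ p.2) := by
  have ht1 : 1 ≤ t := by linarith [ht.1]
  have hpow : t ^ p.1.re ≤ 2 ^ (-p.1.re) * x ^ p.1.re :=
    calc t ^ p.1.re ≤ (x / 2) ^ p.1.re :=
          Real.rpow_le_rpow_of_nonpos (by positivity) (by linarith [ht.1]) hp
      _ = 2 ^ (-p.1.re) * x ^ p.1.re := by
          rw [Real.div_rpow (by linarith) zero_le_two, Real.rpow_neg zero_le_two, div_eq_inv_mul]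
  have hlog : Real.log t ^ p.2 ≤ Real.log x ^ p.2 :=
    pow_le_pow_left₀ (Real.log_nonneg ht1) (Real.log_le_log (by linarith) ht.2) _
  rw [norm_cterm ht1, ← mul_assoc]
  exact mul_le_mul hpow hlog (pow_nonneg (Real.log_nonneg ht1) _) (by positivity)

def powLogMajorant (A : PowLog) (x : ℝ) : ℝ :=
  ∑ p ∈ A.support, ‖A p‖ * (2 ^ (-p.1.re) * (x ^ p.1.re * Real.log x ^ p.2))

lemma norm_powLogEval_le_majorant {A : PowLog}
    (hA : A ∈ supported ℂ ℂ {p : ℂ × ℕ | p.1.re ≤ 0}) {x t : ℝ} (hx : 2 ≤ x)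
    (ht : t ∈ Icc (x - 1) x) : ‖powLogEval t A‖ ≤ powLogMajorant A x := by
  rw [powLogEval_apply]
  refine (norm_sum_le _ _).trans (Finset.sum_le_sum fun p hp => ?_)
  rw [norm_mul]
  exact mul_le_mul_of_nonneg_left
    (norm_cterm_le_of_mem_Icc ((mem_supported ℂ A).1 hA hp) hx ht) (norm_nonneg _)

lemma summable_powLogMajorant {A : PowLog}
    (hA : A ∈ supported ℂ ℂ {p : ℂ × ℕ | p.1.re < -1}) :
    Summable fun l : ℕ => powLogMajorant A l :=
  summable_sum fun p hp =>
    ((summable_rpow_mul_log_pow ((mem_supported ℂ A).1 hA hp) p.2).mul_left _).mul_left _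

lemma norm_taylorRemainder_le {A : PowLog} (hA : A ∈ supported ℂ ℂ {p : ℂ × ℕ | p.1.re ≤ 0})
    {x : ℝ} (hx : 2 ≤ x) (n : ℕ) :
    ‖∫ t in x..x - 1, ((x - 1 - t) ^ n / n.factorial) • powLogEval t A‖ ≤
      powLogMajorant A x := by
  have h := intervalIntegral.norm_integral_le_of_norm_le_const (a := x) (b := x - 1)
    (C := powLogMajorant A x) (f := fun t => ((x - 1 - t) ^ n / n.factorial) • powLogEval t A)
    fun t ht => ?_
  · simpa using h
  rw [uIoc_of_ge (by linarith)] at ht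
  have hcoef : ‖(x - 1 - t) ^ n / (n.factorial : ℝ)‖ ≤ 1 := by
    rw [norm_div, norm_pow, Real.norm_eq_abs, abs_of_nonpos (by linarith [ht.1]),
      RCLike.norm_natCast]
    exact div_le_one_of_le₀
      ((pow_le_one₀ (by linarith [ht.1]) (by linarith [ht.2])).trans (mod_cast n.factorial_pos))
      (Nat.cast_nonneg _)
  rw [norm_smul]
  exact (mul_le_of_le_one_left (norm_nonneg _) hcoef).trans
    (norm_powLogEval_le_majorant hA hx (Ioc_subset_Icc_self ht))

lemma powLogEval_eq_sub_add_taylor {H A : PowLog} (hH : powLogDeriv H = A) {x : ℝ} (hx : 1 < x)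
    (n : ℕ) :
    powLogEval x A = (powLogEval x H - powLogEval (x - 1) H) +
      ∑ i ∈ Finset.range n, (((i + 2).factorial : ℝ)⁻¹ * (-1) ^ (i + 2)) •
        powLogEval x (powLogDeriv^[i + 1] A) +
      ∫ t in x..x - 1, ((x - 1 - t) ^ (n + 1) / (n + 1).factorial) •
        powLogEval t (powLogDeriv^[n + 1] A) := by
  have hiter : ∀ j, powLogDeriv^[j + 1] H = powLogDeriv^[j] A := fun j => by
    rw [Function.iterate_succ_apply, hH]
  have h := powLogEval_taylor_integral_remainder H (a := x - 1) (b := x) (by linarith)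
    (by linarith) (by linarith) (n + 1)
  rw [Finset.sum_range_succ', Finset.sum_range_succ'] at h
  simp only [hiter, sub_sub_cancel_left, Function.iterate_zero, id, zero_add, pow_zero, pow_one,
    Nat.factorial_zero, Nat.factorial_one, Nat.cast_one, inv_one, one_mul, one_smul,
    neg_one_smul] at h
  linear_combination h

def diffModSummable : Submodule ℂ (ℕ → ℂ) where
  carrier := {g | ∃ H : PowLog,
    Summable fun l : ℕ => g l - (powLogEval l H - powLogEval ((l : ℝ) - 1) H)}
  add_mem' := by
    rintro g g' ⟨H, hH⟩ ⟨H', hH'⟩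
    refine ⟨H + H', (hH.add hH').congr fun l => ?_⟩
    simp only [Pi.add_apply, map_add]
    ring
  zero_mem' := ⟨0, by simp [summable_zero]⟩
  smul_mem' := by
    rintro c g ⟨H, hH⟩
    refine ⟨c • H, (hH.mul_left c).congr fun l => ?_⟩
    simp only [Pi.smul_apply, smul_eq_mul, map_smul]
    ring

lemma mem_diffModSummable_of_summable {g : ℕ → ℂ} (hg : Summable g) : g ∈ diffModSummable :=
  ⟨0, by simpa using hg⟩

lemma mem_diffModSummable_of_eventually_eq {g u R : ℕ → ℂ} (hu : u ∈ diffModSummable)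
    (hR : Summable R) (H : PowLog)
    (h : ∀ᶠ l in atTop, g l = (powLogEval l H - powLogEval ((l : ℝ) - 1) H) + u l + R l) :
    g ∈ diffModSummable := by
  obtain ⟨E, hE⟩ := hu
  refine ⟨H + E, (hE.add hR).congr_atTop ?_⟩
  filter_upwards [h] with l hl
  rw [hl, map_add, map_add]
  ring

lemma summable_powLogEval {A : PowLog} (hA : A ∈ supported ℂ ℂ {p : ℂ × ℕ | p.1.re < -1}) :
    Summable fun l : ℕ => powLogEval l A := by
  have hA' : A ∈ supported ℂ ℂ {p : ℂ × ℕ | p.1.re ≤ 0} :=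
    supported_mono (ofPred_subset_ofPred.2 fun p hp => by linarith) hA
  refine (summable_powLogMajorant hA).of_norm_bounded_eventually_nat ?_
  filter_upwards [eventually_ge_atTop 2] with l hl
  have hl' : (2 : ℝ) ≤ l := mod_cast hl
  exact norm_powLogEval_le_majorant hA' hl' ⟨by linarith, le_rfl⟩

lemma summable_taylorRemainder {A : PowLog} (hA : A ∈ supported ℂ ℂ {p : ℂ × ℕ | p.1.re < -1})
    (n : ℕ) :
    Summable fun l : ℕ =>
      ∫ t in (l : ℝ)..l - 1, ((l - 1 - t) ^ n / n.factorial) • powLogEval t A := by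
  have hA' : A ∈ supported ℂ ℂ {p : ℂ × ℕ | p.1.re ≤ 0} :=
    supported_mono (ofPred_subset_ofPred.2 fun p hp => by linarith) hA
  refine (summable_powLogMajorant hA).of_norm_bounded_eventually_nat ?_
  filter_upwards [eventually_ge_atTop 2] with l hl
  exact norm_taylorRemainder_le hA' (mod_cast hl) n

lemma powLogEval_mem_diffModSummable (n : ℕ) {A : PowLog}
    (hA : A ∈ supported ℂ ℂ {p : ℂ × ℕ | p.1.re < n - 1}) :
    (fun l : ℕ => powLogEval l A) ∈ diffModSummable := by
  induction n generalizing A with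
  | zero => exact mem_diffModSummable_of_summable (summable_powLogEval (by simpa using hA))
  | succ n ih =>
    obtain ⟨H, hH⟩ := powLogDeriv_surjective A
    have hlow := powLogDeriv_iterate_mem_supported (σ := n) (by simpa using hA)
    refine mem_diffModSummable_of_eventually_eq (H := H)
      (u := fun l => ∑ i ∈ Finset.range n, (((i + 2).factorial : ℝ)⁻¹ * (-1) ^ (i + 2)) •
        powLogEval l (powLogDeriv^[i + 1] A))
      (R := fun l => ∫ t in (l : ℝ)..l - 1, ((l - 1 - t) ^ (n + 1) / (n + 1).factorial) •
        powLogEval t (powLogDeriv^[n + 1] A)) ?_ ?_ ?_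
    · have hmem : ∀ i ∈ Finset.range n, (fun l : ℕ => powLogEval l (powLogDeriv^[i + 1] A))
          ∈ diffModSummable := fun i _ => ih <| supported_mono
        (ofPred_subset_ofPred.2 fun p hp => by push_cast at hp; linarith) (hlow (i + 1))
      convert Submodule.sum_mem _ fun i hi => Submodule.smul_of_tower_mem _
        (((i + 2).factorial : ℝ)⁻¹ * (-1) ^ (i + 2)) (hmem i hi) using 1
      ext l
      simp [Finset.sum_apply]
    · exact summable_taylorRemainder (supported_mono
        (ofPred_subset_ofPred.2 fun p hp => by push_cast at hp; linarith) (hlow (n + 1))) (n + 1)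
    · filter_upwards [eventually_ge_atTop 2] with l hl
      exact powLogEval_eq_sub_add_taylor hH (by exact_mod_cast hl) n

lemma cterm_mem_diffModSummable (p : ℂ × ℕ) :
    (fun l : ℕ => CTerm p l) ∈ diffModSummable := by
  obtain ⟨n, hn⟩ := exists_nat_gt (p.1.re + 1)
  have hp : p ∈ {p : ℂ × ℕ | p.1.re < n - 1} := show p.1.re < n - 1 by linarith
  simpa [powLogEval_single] using powLogEval_mem_diffModSummable n (single_mem_supported ℂ 1 hp)

lemma sum_Icc_eq_sum_range_add_sub (g : ℕ → ℂ) (E : ℝ → ℂ) (N : ℕ) :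
    ∑ l ∈ Finset.Icc 1 N, g l =
      ∑ l ∈ Finset.range N, (g (l + 1) - (E ((l + 1 : ℕ) : ℝ) - E (((l + 1 : ℕ) : ℝ) - 1))) +
        (E N - E 0) := by
  induction N with
  | zero => simp
  | succ N ih =>
    rw [Finset.sum_Icc_succ_top (by omega), ih, Finset.sum_range_succ, Nat.cast_succ,
      add_sub_cancel_right]
    ring

lemma exists_tendsto_sum_Icc_sub_powLogEval {g : ℕ → ℂ} (hg : g ∈ diffModSummable) :
    ∃ (H : PowLog) (c : ℂ),
      Tendsto (fun N : ℕ => ∑ l ∈ Finset.Icc 1 N, g l - powLogEval N H - c) atTop (𝓝 0) := by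
  obtain ⟨H, hH⟩ := hg
  obtain ⟨S, hS⟩ := (summable_nat_add_iff 1).2 hH
  refine ⟨H, S - powLogEval 0 H,
    (tendsto_sub_nhds_zero_iff.2 hS.tendsto_sum_nat).congr fun N => ?_⟩
  rw [sum_Icc_eq_sum_range_add_sub g (fun x => powLogEval x H)]
  ring

lemma tendsto_cterm_natCast {p : ℂ × ℕ} (hp : ¬(0 ≤ p.1.re ∧ p ≠ (0, 0))) :
    Tendsto (fun N : ℕ => CTerm p N) atTop (𝓝 (if p = (0, 0) then 1 else 0)) := by
  rcases eq_or_ne p (0, 0) with rfl | hp0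
  · simp [CTerm]
  · rw [if_neg hp0]
    exact (tendsto_cterm_atTop_zero (not_le.1 fun h => hp ⟨h, hp0⟩)).comp
      tendsto_natCast_atTop_atTop

lemma exists_hasRegLimSeq_of_tendsto {G : ℕ → ℂ} {H : PowLog} {c : ℂ}
    (h : Tendsto (fun N : ℕ => G N - powLogEval N H - c) atTop (𝓝 0)) :
    ∃ c', HasRegLimSeq G c' := by
  classical
  let P : ℂ × ℕ → Prop := fun p => 0 ≤ p.1.re ∧ p ≠ (0, 0)
  let L : ℂ × ℕ → ℂ := fun p => H p * if p = (0, 0) then 1 else 0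
  have hbad : Tendsto (fun N : ℕ => ∑ p ∈ H.support.filter (¬P ·), H p * CTerm p N) atTop
      (𝓝 (∑ p ∈ H.support.filter (¬P ·), L p)) :=
    tendsto_finsetSum _ fun p hp =>
      tendsto_const_nhds.mul (tendsto_cterm_natCast (Finset.mem_filter.1 hp).2)
  refine ⟨c + ∑ p ∈ H.support.filter (¬P ·), L p, H.support.filter P, H,
    fun p hp => (Finset.mem_filter.1 hp).2, ?_⟩
  have := h.add (tendsto_sub_nhds_zero_iff.2 hbad)
  rw [add_zero] at this
  refine this.congr fun N => ?_
  rw [powLogEval_apply, ← Finset.sum_filter_add_sum_filter_not H.support P]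
  ring

end

/-- Existence of the regularized sum (first part of Proposition `PRegSum`). -/
theorem stmt_3 (f : ℝ → ℂ) (s : Finset (ℂ × ℕ)) (A : ℂ × ℕ → ℂ) (δ : ℝ) (hδ : 0 < δ)
    (hexp : (fun x : ℝ => f x - ∑ p ∈ s, A p * CTerm p x)
      =O[atTop] fun x : ℝ => x ^ (-1 - δ)) :
    (∃ c : ℂ, HasRegLimSeq (fun N => ∑ l ∈ Finset.Icc 1 N, f (l : ℝ)) c) := by
  have hrem : Summable fun l : ℕ => f l - ∑ p ∈ s, A p * CTerm p l :=
    summable_of_isBigO_nat (Real.summable_nat_rpow.2 (by linarith))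
      (hexp.comp_tendsto tendsto_natCast_atTop_atTop)
  have hf : (fun l : ℕ => f l) ∈ diffModSummable := by
    convert add_mem (mem_diffModSummable_of_summable hrem) (Submodule.sum_mem (t := s) _ fun p _ =>
      Submodule.smul_mem _ (A p) (cterm_mem_diffModSummable p)) using 1
    ext l
    simp
  obtain ⟨H, c, h⟩ := exists_tendsto_sum_Icc_sub_powLogEval hf
  exact exists_hasRegLimSeq_of_tendsto h
end

section
/- Let f ∈ C^∞(ℝ₊² \ {(0,0)}) be homogeneous of degree -2, and let b > 0. Then the regularized limits of log(z) · ⨍_{b/z}^∞ f(1,y) dy as z → 0 and as z → ∞ both vanish. -/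
open MeasureTheory Filter Asymptotics

section AuxLemmas
open Polynomial Filter

open Polynomial Filter

lemma taylor_coeff_natDegree' (c : ℂ) (p : ℂ[X]) :
    (taylor c p).coeff p.natDegree = p.coeff p.natDegree := by
  rw [taylor_coeff]
  have h1 : natDegree (hasseDeriv p.natDegree p) = 0 := by
    have := natDegree_hasseDeriv p p.natDegree
    omega
  have h2 : hasseDeriv p.natDegree p = C ((hasseDeriv p.natDegree p).coeff 0) :=
    eq_C_of_natDegree_eq_zero h1
  rw [h2, eval_C, hasseDeriv_coeff]
  simp

lemma choose_succ_pred (d : ℕ) : (1 + d).choose d = 1 + d := by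
  rw [Nat.add_comm 1 d, Nat.choose_succ_self_right]

lemma taylor_coeff_pred (p : ℂ[X]) (d : ℕ) (hd : p.natDegree = d + 1) :
    (taylor (1:ℂ) p).coeff d = p.coeff d + (d+1) * p.coeff (d+1) := by
  rw [taylor_coeff]
  have hle : natDegree (hasseDeriv d p) ≤ 1 := by
    have := natDegree_hasseDeriv p d; omega
  rw [eval_eq_sum_range' (lt_of_le_of_lt hle (by norm_num : (1:ℕ) < 2))]
  rw [Finset.sum_range_succ, Finset.sum_range_succ]
  simp only [hasseDeriv_coeff, Nat.zero_add, Nat.choose_self, Nat.cast_one, one_mul, pow_zero,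
    mul_one, Finset.sum_range_zero, zero_add, pow_one, choose_succ_pred]
  push_cast
  ring_nf

lemma poly_tendsto_const : ∀ (n : ℕ) (p : ℂ[X]) (l : ℂ), p.natDegree ≤ n →
    Tendsto (fun t : ℝ => p.eval (t : ℂ)) atTop (nhds l) → p = C l := by
  intro n
  induction n with
  | zero =>
    intro p l hdeg htend
    have hp : p = C (p.coeff 0) := eq_C_of_natDegree_eq_zero (Nat.le_zero.mp hdeg)
    have : Tendsto (fun _ : ℝ => p.coeff 0) atTop (nhds l) := by
      convert htend using 2 with t
      rw [hp]; simp
    rw [hp, tendsto_const_nhds_iff.mp this]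
  | succ n ih =>
    intro p l hdeg htend
    by_cases hd : p.natDegree ≤ n
    · exact ih p l hd htend
    · have hdeq : p.natDegree = n + 1 := by omega
      set q : ℂ[X] := taylor 1 p - p with hq
      have hqdeg : q.natDegree ≤ n := by
        apply Polynomial.natDegree_le_iff_coeff_eq_zero.mpr
        intro m hm
        by_cases hm2 : m ≤ p.natDegree
        · have hmeq : m = p.natDegree := by omega
          rw [hq, Polynomial.coeff_sub, hmeq, taylor_coeff_natDegree', sub_self]
        · rw [hq, Polynomial.coeff_sub,
            Polynomial.coeff_eq_zero_of_natDegree_lt (by rw [natDegree_taylor]; omega),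
            Polynomial.coeff_eq_zero_of_natDegree_lt (by omega), sub_self]
      have hqtend : Tendsto (fun t : ℝ => q.eval (t : ℂ)) atTop (nhds 0) := by
        have h1 : Tendsto (fun t : ℝ => p.eval ((t : ℂ) + 1)) atTop (nhds l) := by
          have h2 := htend.comp (tendsto_atTop_add_const_right atTop (1:ℝ) tendsto_id)
          exact h2.congr (fun t => by simp only [Function.comp_apply, id_eq]; norm_cast)
        have h3 := h1.sub htend
        rw [sub_self] at h3
        exact h3.congr (fun t => by rw [hq]; simp [taylor_eval])
      have hq0 : q = C 0 := ih q 0 hqdeg hqtend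
      exfalso
      have hc : q.coeff n = (n+1 : ℂ) * p.coeff (n+1) := by
        rw [hq, Polynomial.coeff_sub, taylor_coeff_pred p n hdeq]
        ring
      rw [hq0] at hc
      have hz : (0:ℂ) = ((n:ℂ)+1) * p.coeff (n+1) := by simpa using hc.symm
      have h0 : p.coeff (n+1) = 0 :=
        (mul_eq_zero.mp hz.symm).resolve_left (Nat.cast_add_one_ne_zero n)
      have hpne : p ≠ 0 := fun h => by simp [h] at hdeq
      exact (Polynomial.leadingCoeff_ne_zero.mpr hpne) (by rwa [Polynomial.leadingCoeff, hdeq])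
open Polynomial Filter

noncomputable def psize (p : ℂ[X]) : ℕ := if p = 0 then 0 else p.natDegree + 1

lemma psize_le (p : ℂ[X]) (hp : p ≠ 0) : psize p = p.natDegree + 1 := if_neg hp

lemma exists_good_c (D : Finset ℂ) :
    ∃ c : ℝ, 0 < c ∧ ∀ β ∈ D, β ≠ 0 → Complex.exp (β * c) ≠ 1 := by
  classical
  have hcnt : ∀ β : ℂ, β ≠ 0 → Set.Countable {c : ℝ | Complex.exp (β * c) = 1} := by
    intro β hβ
    apply Set.Countable.mono ?_
      (Set.countable_range (fun n : ℤ => (((n : ℂ) * (2 * Real.pi * Complex.I)) / β).re))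
    intro c hc
    rw [Set.mem_setOf_eq, Complex.exp_eq_one_iff] at hc
    obtain ⟨n, hn⟩ := hc
    refine ⟨n, ?_⟩
    have hcc : (c : ℂ) = ((n : ℂ) * (2 * Real.pi * Complex.I)) / β := by
      field_simp
      linear_combination hn
    simp only [← hcc, Complex.ofReal_re]
  set bad : Set ℝ := ⋃ β ∈ D.filter (· ≠ 0), {c : ℝ | Complex.exp (β * c) = 1} with hbad
  have hbadcnt : bad.Countable := by
    apply Set.Countable.biUnion (D.filter (· ≠ 0)).countable_toSet
    intro β hβ
    exact hcnt β (by simpa using (Finset.mem_filter.mp hβ).2)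
  have hne : ¬ (Set.Ioi (0:ℝ) ⊆ bad) := by
    intro hsub
    have h1 : MeasureTheory.volume (Set.Ioi (0:ℝ)) = 0 :=
      le_antisymm (le_trans (MeasureTheory.measure_mono hsub)
        (le_of_eq (hbadcnt.measure_zero _))) zero_le
    simp [Real.volume_Ioi] at h1
  obtain ⟨c, hc1, hc2⟩ := Set.not_subset.mp hne
  refine ⟨c, hc1, ?_⟩
  intro β hβ hβ0 hexp
  exact hc2 (Set.mem_biUnion (Finset.mem_coe.mpr (Finset.mem_filter.mpr ⟨hβ, by simpa⟩)) hexp)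

lemma case_b (E : Finset ℂ) (P : ℂ → ℂ[X]) (l : ℂ)
    (hPz : ∀ α ∈ E, α ≠ 0 → P α = 0)
    (ht : Tendsto (fun t : ℝ => ∑ α ∈ E, Complex.exp (α * t) * (P α).eval (t:ℂ))
      atTop (nhds l)) :
    (0 ∈ E → P 0 = C ((P 0).coeff 0)) ∧ l = (if (0:ℂ) ∈ E then (P 0).coeff 0 else 0) := by
  by_cases h0 : (0:ℂ) ∈ E
  · have heq : ∀ t : ℝ, (∑ α ∈ E, Complex.exp (α * t) * (P α).eval (t:ℂ))
        = (P 0).eval (t:ℂ) := by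
      intro t
      rw [Finset.sum_eq_single 0]
      · simp
      · intro α hα hne; rw [hPz α hα hne]; simp
      · intro h; exact absurd h0 h
    have hP0 : P 0 = C l := poly_tendsto_const (P 0).natDegree (P 0) l le_rfl
      (ht.congr heq)
    constructor
    · intro _; rw [hP0]; simp
    · rw [if_pos h0, hP0]; simp
  · have heq : ∀ t : ℝ, (∑ α ∈ E, Complex.exp (α * t) * (P α).eval (t:ℂ)) = 0 := by
      intro t
      apply Finset.sum_eq_zero
      intro α hα
      rw [hPz α hα (fun h => h0 (h ▸ hα))]; simp
    have : l = 0 := (tendsto_nhds_unique (ht.congr heq) tendsto_const_nhds)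
    exact ⟨fun h => absurd h h0, by rw [if_neg h0]; exact this⟩

lemma exp_poly_key : ∀ (N : ℕ) (E : Finset ℂ) (P : ℂ → ℂ[X]) (l : ℂ),
    (∀ α ∈ E, 0 ≤ α.re) → (∑ α ∈ E, psize (P α)) ≤ N →
    Tendsto (fun t : ℝ => ∑ α ∈ E, Complex.exp (α * t) * (P α).eval (t:ℂ))
      atTop (nhds l) →
    (∀ α ∈ E, α ≠ 0 → P α = 0) ∧ (0 ∈ E → P 0 = C ((P 0).coeff 0)) ∧
      l = (if (0:ℂ) ∈ E then (P 0).coeff 0 else 0) := by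
  intro N
  induction N with
  | zero =>
    intro E P l hre hsz ht
    have hPz : ∀ α ∈ E, P α = 0 := by
      intro α hα
      by_contra hP
      have h1 : 1 ≤ psize (P α) := by rw [psize_le _ hP]; omega
      have h2 : psize (P α) ≤ ∑ β ∈ E, psize (P β) := Finset.single_le_sum (f := fun β => psize (P β))
        (fun β _ => Nat.zero_le _) hα
      omega
    have hPz' : ∀ α ∈ E, α ≠ 0 → P α = 0 := fun α hα _ => hPz α hα
    exact ⟨hPz', (case_b E P l hPz' ht).1, (case_b E P l hPz' ht).2⟩
  | succ N ih =>
    intro E P l hre hsz ht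
    by_cases hex : ∃ α₀ ∈ E, α₀ ≠ 0 ∧ P α₀ ≠ 0
    · obtain ⟨α₀, hα₀E, hα₀ne, hPα₀⟩ := hex
      obtain ⟨c, hcpos, hgood⟩ := exists_good_c ((insert (0:ℂ) E).image (fun α => α - α₀))
      have hcne : (c:ℂ) ≠ 0 := by exact_mod_cast ne_of_gt hcpos
      have hneq : ∀ α ∈ E, α ≠ α₀ → Complex.exp (α * c) ≠ Complex.exp (α₀ * c) := by
        intro α hα hne heq
        have h1 := hgood (α - α₀)
          (Finset.mem_image_of_mem _ (Finset.mem_insert_of_mem hα)) (sub_ne_zero.mpr hne)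
        apply h1
        rw [sub_mul, Complex.exp_sub, heq, div_self (Complex.exp_ne_zero _)]
      have hone : Complex.exp (α₀ * c) ≠ 1 := by
        intro h
        have h1 := hgood (0 - α₀)
          (Finset.mem_image_of_mem _ (Finset.mem_insert_self _ _))
          (by simpa using hα₀ne)
        apply h1
        rw [zero_sub, neg_mul, Complex.exp_neg, h, inv_one]
      set Q : ℂ → ℂ[X] := fun α =>
        Complex.exp (α * c) • taylor (c:ℂ) (P α) - Complex.exp (α₀ * c) • P α with hQ
      -- pointwise identity
      have hpt : ∀ t : ℝ,
          (∑ α ∈ E, Complex.exp (α * ((t + c : ℝ)):ℂ) * (P α).eval ((t + c : ℝ):ℂ))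
            - Complex.exp (α₀ * c) * ∑ α ∈ E, Complex.exp (α * t) * (P α).eval (t:ℂ)
          = ∑ α ∈ E, Complex.exp (α * t) * (Q α).eval (t:ℂ) := by
        intro t
        rw [Finset.mul_sum, ← Finset.sum_sub_distrib]
        apply Finset.sum_congr rfl
        intro α _
        have e1 : Complex.exp (α * ((t + c : ℝ):ℂ)) =
            Complex.exp (α * t) * Complex.exp (α * c) := by
          rw [← Complex.exp_add]; push_cast; ring_nf
        have e2 : (P α).eval ((t + c : ℝ):ℂ) = (taylor (c:ℂ) (P α)).eval (t:ℂ) := by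
          rw [taylor_eval]; push_cast; ring_nf
        rw [e1, e2, hQ]
        simp only [eval_sub, eval_smul, smul_eq_mul]
        ring
      have hQt : Tendsto (fun t : ℝ => ∑ α ∈ E, Complex.exp (α * t) * (Q α).eval (t:ℂ))
          atTop (nhds (l - Complex.exp (α₀ * c) * l)) := by
        have hshift := ht.comp (tendsto_atTop_add_const_right atTop c tendsto_id)
        have := hshift.sub (ht.const_mul (Complex.exp (α₀ * c)))
        exact this.congr hpt
      -- size bound
      have hsz1 : ∀ α ∈ E, psize (Q α) ≤ psize (P α) := by
        intro α _
        by_cases hP : P α = 0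
        · simp [hQ, hP, psize]
        · by_cases hQ0 : Q α = 0
          · simp [hQ0, psize]
          · rw [psize_le _ hQ0, psize_le _ hP]
            have : (Q α).natDegree ≤ (P α).natDegree := by
              apply le_trans (natDegree_sub_le _ _)
              simp only [max_le_iff]
              constructor
              · exact le_trans (natDegree_smul_le _ _) (le_of_eq (natDegree_taylor _ _))
              · exact natDegree_smul_le _ _
            omega
      have hsz2 : psize (Q α₀) ≤ (P α₀).natDegree := by
        have hfact : Q α₀ = Complex.exp (α₀ * c) • (taylor (c:ℂ) (P α₀) - P α₀) := by
          rw [hQ]; rw [smul_sub]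
        by_cases hQ0 : Q α₀ = 0
        · simp [hQ0, psize]
        · rw [psize_le _ hQ0]
          have hsub0 : taylor (c:ℂ) (P α₀) - P α₀ ≠ 0 := by
            intro h; apply hQ0; rw [hfact, h, smul_zero]
          have hd1 : 1 ≤ (P α₀).natDegree := by
            by_contra h
            have : (P α₀).natDegree = 0 := by omega
            obtain ⟨k, hk⟩ : ∃ k, P α₀ = C k := ⟨_, eq_C_of_natDegree_eq_zero this⟩
            apply hsub0; rw [hk, taylor_C, sub_self]
          have hcoeff : (taylor (c:ℂ) (P α₀) - P α₀).coeff (P α₀).natDegree = 0 := by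
            rw [coeff_sub, taylor_coeff_natDegree', sub_self]
          have hdle : (taylor (c:ℂ) (P α₀) - P α₀).natDegree ≤ (P α₀).natDegree := by
            apply le_trans (natDegree_sub_le _ _)
            simp [natDegree_taylor]
          have hdlt : (taylor (c:ℂ) (P α₀) - P α₀).natDegree < (P α₀).natDegree := by
            rcases lt_or_eq_of_le hdle with h | h
            · exact h
            · exfalso
              apply hsub0
              apply leadingCoeff_eq_zero.mp
              rw [leadingCoeff, h, hcoeff]
          have : (Q α₀).natDegree ≤ (taylor (c:ℂ) (P α₀) - P α₀).natDegree := by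
            rw [hfact]; exact natDegree_smul_le _ _
          omega
      have hsize : (∑ α ∈ E, psize (Q α)) ≤ N := by
        have e1 : psize (Q α₀) + ∑ α ∈ E.erase α₀, psize (Q α) = ∑ α ∈ E, psize (Q α) :=
          Finset.add_sum_erase E (fun α => psize (Q α)) hα₀E
        have e2 : psize (P α₀) + ∑ α ∈ E.erase α₀, psize (P α) = ∑ α ∈ E, psize (P α) :=
          Finset.add_sum_erase E (fun α => psize (P α)) hα₀E
        have e3 : ∑ α ∈ E.erase α₀, psize (Q α) ≤ ∑ α ∈ E.erase α₀, psize (P α) :=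
          Finset.sum_le_sum (fun α hα => hsz1 α (Finset.mem_of_mem_erase hα))
        have e4 : psize (P α₀) = (P α₀).natDegree + 1 := psize_le _ hPα₀
        omega
      obtain ⟨hQ0, hQc, hl1⟩ := ih E Q (l - Complex.exp (α₀ * c) * l) hre hsize hQt
      -- extraction
      have hPother : ∀ α ∈ E, α ≠ 0 → α ≠ α₀ → P α = 0 := by
        intro α hα hne0 hneα₀
        by_contra hP
        have hQz := hQ0 α hα hne0
        have hco : (Q α).coeff (P α).natDegree = 0 := by rw [hQz]; simp
        simp only [hQ, coeff_sub, coeff_smul, smul_eq_mul] at hco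
        rw [taylor_coeff_natDegree'] at hco
        have hco2 : (Complex.exp (α * c) - Complex.exp (α₀ * c)) *
            (P α).coeff (P α).natDegree = 0 := by linear_combination hco
        rcases mul_eq_zero.mp hco2 with h | h
        · exact (sub_ne_zero.mpr (hneq α hα hneα₀)) h
        · exact hP (Polynomial.leadingCoeff_eq_zero.mp h)
      have hQα₀ := hQ0 α₀ hα₀E hα₀ne
      have htay : taylor (c:ℂ) (P α₀) = P α₀ := by
        simp only [hQ] at hQα₀
        have h2 : Complex.exp (α₀*c) • (taylor (c:ℂ) (P α₀) - P α₀) = 0 := by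
          rw [smul_sub]; exact hQα₀
        have h3 := (smul_eq_zero.mp h2).resolve_left (Complex.exp_ne_zero _)
        exact sub_eq_zero.mp h3
      have heval : ∀ n : ℕ, (P α₀).eval ((n:ℂ) * c) = (P α₀).eval 0 := by
        intro n; induction n with
        | zero => simp
        | succ n ihn =>
          have hst : ((n+1 : ℕ):ℂ) * c = (n:ℂ)*c + c := by push_cast; ring
          rw [hst, ← taylor_eval (c:ℂ) (P α₀) ((n:ℂ)*c), htay]
          exact ihn
      have hkconst : P α₀ = C ((P α₀).eval 0) := by
        apply eq_of_infinite_eval_eq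
        apply Set.infinite_of_injective_forall_mem (f := fun n : ℕ => (n:ℂ) * c)
        · intro a b hab
          have := mul_right_cancel₀ hcne hab
          exact_mod_cast this
        · intro n
          simp only [Set.mem_setOf_eq, eval_C]
          exact heval n
      have hP0c : (0:ℂ) ∈ E → P 0 = C ((P 0).coeff 0) := by
        intro h0
        rcases Nat.eq_zero_or_pos (P 0).natDegree with hd | hd
        · exact eq_C_of_natDegree_eq_zero hd
        · exfalso
          have hQ0c := hQc h0
          have hco : (Q 0).coeff (P 0).natDegree = 0 := by
            rw [hQ0c, coeff_C, if_neg (by omega)]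
          simp only [hQ, coeff_sub, coeff_smul, smul_eq_mul, zero_mul,
            Complex.exp_zero, one_mul] at hco
          rw [taylor_coeff_natDegree'] at hco
          have hco2 : (1 - Complex.exp (α₀*c)) * (P 0).coeff (P 0).natDegree = 0 := by
            linear_combination hco
          rcases mul_eq_zero.mp hco2 with h | h
          · exact (sub_ne_zero.mpr (Ne.symm hone)) h
          · have hne : P 0 ≠ 0 := fun hz => by simp [hz] at hd
            exact hne (Polynomial.leadingCoeff_eq_zero.mp h)
      have hlval : l = (if (0:ℂ) ∈ E then (P 0).coeff 0 else 0) := by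
        by_cases h0 : (0:ℂ) ∈ E
        · rw [if_pos h0]
          rw [if_pos h0] at hl1
          have hb := hP0c h0
          have hQ0eval : (Q 0).coeff 0 =
              (P 0).coeff 0 - Complex.exp (α₀*c) * (P 0).coeff 0 := by
            simp only [hQ, coeff_sub, coeff_smul, smul_eq_mul, zero_mul,
              Complex.exp_zero, one_mul, taylor_coeff_zero]
            rw [hb]; simp
          rw [hQ0eval] at hl1
          have hco2 : (1 - Complex.exp (α₀*c)) * (l - (P 0).coeff 0) = 0 := by
            linear_combination hl1
          rcases mul_eq_zero.mp hco2 with h | h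
          · exact absurd h (sub_ne_zero.mpr (Ne.symm hone))
          · exact sub_eq_zero.mp h
        · rw [if_neg h0]
          rw [if_neg h0] at hl1
          have hco2 : (1 - Complex.exp (α₀*c)) * l = 0 := by linear_combination hl1
          rcases mul_eq_zero.mp hco2 with h | h
          · exact absurd h (sub_ne_zero.mpr (Ne.symm hone))
          · exact h
      have hsum : ∀ t : ℝ, (∑ α ∈ E, Complex.exp (α * t) * (P α).eval (t:ℂ))
          = Complex.exp (α₀ * t) * (P α₀).eval 0 + l := by
        intro t
        rw [← Finset.add_sum_erase E _ hα₀E]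
        congr 1
        · rw [hkconst]; simp
        · by_cases h0 : (0:ℂ) ∈ E
          · rw [Finset.sum_eq_single 0]
            · rw [hlval, if_pos h0, hP0c h0]; simp
            · intro β hβ hne
              rw [hPother β (Finset.mem_of_mem_erase hβ) hne (Finset.ne_of_mem_erase hβ)]
              simp
            · intro hnot
              exact absurd (Finset.mem_erase.mpr ⟨Ne.symm hα₀ne, h0⟩) hnot
          · rw [Finset.sum_eq_zero, hlval, if_neg h0]
            intro β hβ
            have hβE := Finset.mem_of_mem_erase hβ
            rw [hPother β hβE (fun h => h0 (h ▸ hβE)) (Finset.ne_of_mem_erase hβ)]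
            simp
      have hk0 : (P α₀).eval 0 = 0 := by
        have htk : Tendsto (fun t : ℝ => Complex.exp (α₀ * t) * (P α₀).eval 0)
            atTop (nhds 0) := by
          have h5 := ht.sub (tendsto_const_nhds (x := l))
          rw [sub_self] at h5
          exact h5.congr (fun t => by rw [hsum t]; ring)
        by_contra hk
        have hlower : ∀ᶠ t : ℝ in atTop,
            ‖(P α₀).eval 0‖ ≤ ‖Complex.exp (α₀ * t) * (P α₀).eval 0‖ := by
          filter_upwards [eventually_ge_atTop (0:ℝ)] with t ht0
          simp only [norm_mul, Complex.norm_exp]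
          have hre2 : (α₀ * (t:ℂ)).re = α₀.re * t := by
            simp [Complex.mul_re]
          rw [hre2]
          have h1 : (1:ℝ) ≤ Real.exp (α₀.re * t) :=
            Real.one_le_exp (mul_nonneg (hre α₀ hα₀E) ht0)
          nlinarith [norm_nonneg ((P α₀).eval 0)]
        have hle := ge_of_tendsto htk.norm hlower
        rw [norm_zero] at hle
        exact hk (norm_le_zero_iff.mp hle)
      have hPα₀0 : P α₀ = 0 := by rw [hkconst, hk0, map_zero]
      refine ⟨?_, hP0c, hlval⟩
      intro α hα hne
      by_cases h : α = α₀
      · rw [h]; exact hPα₀0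
      · exact hPother α hα hne h

    · push_neg at hex
      exact ⟨hex, (case_b E P l hex ht).1, (case_b E P l hex ht).2⟩


lemma reg_sum_tendsto_zero (s : Finset (ℂ × ℕ)) (A : ℂ × ℕ → ℂ)
    (hs : ∀ p ∈ s, 0 ≤ p.1.re ∧ p ≠ (0, 0)) (l : ℂ)
    (h : Filter.Tendsto (fun x : ℝ => ∑ p ∈ s, A p * CTerm p x) Filter.atTop (nhds l)) :
    l = 0 := by
  classical
  have h' := h.comp Real.tendsto_exp_atTop
  set E : Finset ℂ := s.image Prod.fst with hE
  set P : ℂ → ℂ[X] := fun α => ∑ p ∈ s.filter (fun q => q.1 = α), C (A p) * X ^ p.2 with hP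
  have hpt : ∀ t : ℝ, (∑ p ∈ s, A p * CTerm p (Real.exp t))
      = ∑ α ∈ E, Complex.exp (α * t) * (P α).eval (t:ℂ) := by
    intro t
    rw [← Finset.sum_fiberwise_of_maps_to (g := Prod.fst)
      (fun p hp => Finset.mem_image_of_mem _ hp)]
    apply Finset.sum_congr rfl
    intro α _
    rw [hP]
    simp only [eval_finset_sum, eval_mul, eval_pow, eval_C, eval_X]
    rw [Finset.mul_sum]
    apply Finset.sum_congr rfl
    intro p hp
    have hp1 : p.1 = α := by simpa using (Finset.mem_filter.mp hp).2
    have hct : CTerm p (Real.exp t) = Complex.exp (α * t) * (t:ℂ)^p.2 := by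
      rw [CTerm, Real.log_exp, hp1]
      congr 1
      rw [Complex.cpow_def_of_ne_zero (by exact_mod_cast (Real.exp_pos t).ne')]
      rw [← Complex.ofReal_log (Real.exp_pos t).le, Real.log_exp, mul_comm]
    rw [hct]; ring
  obtain ⟨-, -, hl⟩ := exp_poly_key (∑ α ∈ E, psize (P α)) E P l
    (by
      intro α hα
      obtain ⟨p, hp, hp1⟩ := Finset.mem_image.mp hα
      rw [← hp1]; exact (hs p hp).1)
    le_rfl (h'.congr hpt)
  have hc0 : (0:ℂ) ∈ E → (P 0).coeff 0 = 0 := by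
    intro _
    rw [hP]
    simp only [finset_sum_coeff]
    apply Finset.sum_eq_zero
    intro p hp
    obtain ⟨hps, hp1⟩ := Finset.mem_filter.mp hp
    have hp2 : p.2 ≠ 0 := by
      intro h2
      exact (hs p hps).2 (Prod.ext (by simpa using hp1) h2)
    rw [coeff_C_mul, coeff_X_pow, if_neg (Ne.symm hp2), mul_zero]
  rw [hl]
  split_ifs with h0
  · exact hc0 h0
  · rfl

end AuxLemmas

/-- Lemma `LLimits`, part 2: for `f` homogeneous of degree `-2` and `b > 0`, the
regularized limits of `log z · ⨍_{b/z}^∞ f(1,y) dy` as `z → 0` and as `z → ∞` vanish. -/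
theorem stmt_7 (f : ℝ × ℝ → ℂ)
    (hsm : ContDiffOn ℝ (⊤ : ℕ∞) f Qset) (hhom : Homog f (-2))
    (b : ℝ) (hb : 0 < b)
    (I : ℝ → ℂ) (hI : ∀ z : ℝ, 0 < z → HasRegInt (fun y => f (1, y)) (b / z) (I z)) :
    HasRegLimAtZero (fun z => (Real.log z : ℂ) * I z) 0 ∧
    HasRegLimAtTop (fun z => (Real.log z : ℂ) * I z) 0 := by
  classical
  set g : ℝ → ℂ := fun y => f (1, y) with hg
  have hmem : ∀ y : ℝ, 0 ≤ y → ((1:ℝ), y) ∈ Qset := by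
    intro y hy
    refine ⟨⟨zero_le_one, hy⟩, ?_⟩
    simp [Prod.ext_iff]
  have hmem' : ∀ x : ℝ, 0 ≤ x → ((x:ℝ), (1:ℝ)) ∈ Qset := by
    intro x hx
    refine ⟨⟨hx, zero_le_one⟩, ?_⟩
    simp [Prod.ext_iff]
  have hgcont : ContinuousOn g (Set.Ici 0) := by
    apply (hsm.continuousOn).comp
      (Continuous.continuousOn (by continuity : Continuous (fun y : ℝ => ((1:ℝ), y))))
    intro y hy
    exact hmem y hy
  obtain ⟨M₀, hM₀⟩ : ∃ M, ∀ y ∈ Set.Icc (0:ℝ) 1, ‖g y‖ ≤ M :=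
    isCompact_Icc.exists_bound_of_continuousOn (hgcont.mono Set.Icc_subset_Ici_self)
  obtain ⟨M₁, hM₁⟩ : ∃ M, ∀ x ∈ Set.Icc (0:ℝ) 1, ‖f (x, 1)‖ ≤ M := by
    apply isCompact_Icc.exists_bound_of_continuousOn
    apply (hsm.continuousOn).comp
      (Continuous.continuousOn (by continuity : Continuous (fun x : ℝ => (x, (1:ℝ)))))
    intro x hx
    exact hmem' x hx.1
  set CB : ℝ := max M₀ 0 + max M₁ 0 with hCB
  have hCB0 : 0 ≤ CB := by positivity
  have hCBM₀ : M₀ ≤ CB := by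
    have := le_max_left M₀ 0; have := le_max_right M₁ 0; simp only [hCB]; linarith
  have hCBM₁ : M₁ ≤ CB := by
    have := le_max_left M₁ 0; have := le_max_right M₀ 0; simp only [hCB]; linarith
  have hbig : ∀ y : ℝ, 1 ≤ y → ‖g y‖ ≤ CB * y^(-2:ℝ) := by
    intro y hy
    have hy0 : (0:ℝ) < y := lt_of_lt_of_le one_pos hy
    have hhom' := hhom y hy0 (1/y, 1) (hmem' (1/y) (by positivity))
    have h1 : (y * (1/y), y * (1:ℝ)) = ((1:ℝ), y) := by
      rw [mul_one_div_cancel hy0.ne', mul_one]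
    have h2 : g y = (y:ℂ)^(-2:ℂ) * f (1/y, 1) := by
      rw [hg]; dsimp only; rw [← h1]; exact hhom'
    rw [h2, norm_mul]
    have h3 : ‖(y:ℂ)^(-2:ℂ)‖ = y^(-2:ℝ) := by
      rw [Complex.norm_cpow_eq_rpow_re_of_pos hy0]
      norm_num
    rw [h3]
    have h4 : ‖f (1/y, 1)‖ ≤ CB := by
      apply le_trans (hM₁ (1/y) ⟨by positivity, ?_⟩) hCBM₁
      rw [div_le_one hy0]; exact hy
    have h5 : (0:ℝ) < y^(-2:ℝ) := Real.rpow_pos_of_pos hy0 _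
    nlinarith [norm_nonneg (f (1/y, 1))]
  have hsmall : ∀ y ∈ Set.Icc (0:ℝ) 1, ‖g y‖ ≤ CB :=
    fun y hy => le_trans (hM₀ y hy) hCBM₀
  have hallb : ∀ y : ℝ, 0 < y → ‖g y‖ ≤ CB * y^(-2:ℝ) := by
    intro y hy
    rcases le_or_gt y 1 with h | h
    · have h1 : (1:ℝ) ≤ y^(-2:ℝ) :=
        Real.one_le_rpow_of_pos_of_le_one_of_nonpos hy h (by norm_num)
      have h2 := hsmall y ⟨hy.le, h⟩
      nlinarith [norm_nonneg (g y)]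
    · exact hbig y h.le
  have hint : ∀ a : ℝ, 0 < a → MeasureTheory.IntegrableOn g (Set.Ioi a) := by
    intro a ha
    apply MeasureTheory.Integrable.mono'
      ((integrableOn_Ioi_rpow_of_lt (a := (-2:ℝ)) (by norm_num) ha).const_mul CB)
    · exact ((hgcont.mono (fun y (hy : y ∈ Set.Ioi a) => (lt_trans ha hy).le)).aestronglyMeasurable
        measurableSet_Ioi)
    · apply (MeasureTheory.ae_restrict_iff' measurableSet_Ioi).mpr
      exact Filter.Eventually.of_forall (fun y hy => hallb y (lt_trans ha hy))
  have hint0 : MeasureTheory.IntegrableOn g (Set.Ioi 0) := by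
    rw [← Set.Ioc_union_Ioi_eq_Ioi (zero_le_one : (0:ℝ) ≤ 1)]
    apply MeasureTheory.IntegrableOn.union ?_ (hint 1 one_pos)
    apply MeasureTheory.Integrable.mono'
      (MeasureTheory.integrableOn_const (C := CB) (by simp [Real.volume_Ioc]))
    · exact ((hgcont.mono (fun y (hy : y ∈ Set.Ioc 0 1) => hy.1.le)).aestronglyMeasurable
        measurableSet_Ioc)
    · apply (MeasureTheory.ae_restrict_iff' measurableSet_Ioc).mpr
      exact Filter.Eventually.of_forall (fun y hy => hsmall y ⟨hy.1.le, hy.2⟩)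
  have hIval : ∀ z : ℝ, 0 < z → I z = ∫ y in Set.Ioi (b/z), g y := by
    intro z hz
    have hbz : 0 < b / z := div_pos hb hz
    rcases hI z hz with ⟨hne, s, A, hcond, hten⟩ | ⟨heq, _⟩
    · have hconv := MeasureTheory.intervalIntegral_tendsto_integral_Ioi (b/z)
        (hint _ hbz) (Filter.tendsto_id (α := ℝ))
      have h6 := hconv.sub hten
      rw [sub_zero] at h6
      have h7 : ∀ R : ℝ, (∫ x in (b/z)..R, g x) -
          ((∫ x in (b/z)..R, g x) - (∑ p ∈ s, A p * CTerm p R) - I z)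
          = (∑ p ∈ s, A p * CTerm p R) + I z := by intro R; ring
      have h8 := (h6.congr h7).sub (tendsto_const_nhds (x := I z))
      have h9 : Filter.Tendsto (fun R : ℝ => ∑ p ∈ s, A p * CTerm p R) Filter.atTop
          (nhds ((∫ y in Set.Ioi (b/z), g y) - I z)) :=
        h8.congr (fun R => by ring)
      have h10 := reg_sum_tendsto_zero s A hcond _ h9
      exact (sub_eq_zero.mp h10).symm
    · exact absurd heq hbz.ne'
  have htail : ∀ a : ℝ, 1 ≤ a → ‖∫ y in Set.Ioi a, g y‖ ≤ CB / a := by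
    intro a ha
    have ha0 : (0:ℝ) < a := lt_of_lt_of_le one_pos ha
    have h1 : ‖∫ y in Set.Ioi a, g y‖ ≤ ∫ y in Set.Ioi a, CB * y^(-2:ℝ) := by
      apply MeasureTheory.norm_integral_le_of_norm_le
        ((integrableOn_Ioi_rpow_of_lt (a := (-2:ℝ)) (by norm_num) ha0).const_mul CB)
      apply (MeasureTheory.ae_restrict_iff' measurableSet_Ioi).mpr
      exact Filter.Eventually.of_forall (fun y hy => hallb y (lt_trans ha0 hy))
    have h2 : (∫ y in Set.Ioi a, CB * y^(-2:ℝ)) = CB * a^(-1:ℝ) := by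
      rw [MeasureTheory.integral_const_mul, integral_Ioi_rpow_of_lt (by norm_num) ha0]
      norm_num
    rw [h2, Real.rpow_neg_one] at h1
    calc ‖∫ y in Set.Ioi a, g y‖ ≤ CB * a⁻¹ := h1
    _ = CB / a := by rw [div_eq_mul_inv]
  have hhead : ∀ a : ℝ, 0 < a → a ≤ 1 →
      ‖(∫ y in Set.Ioi 0, g y) - ∫ y in Set.Ioi a, g y‖ ≤ CB * a := by
    intro a ha ha1
    have hsplit : (∫ y in Set.Ioi 0, g y)
        = (∫ y in Set.Ioc 0 a, g y) + ∫ y in Set.Ioi a, g y := by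
      have h := MeasureTheory.setIntegral_union (f := g) (μ := MeasureTheory.volume)
        (Set.Ioc_disjoint_Ioi (le_refl a)) measurableSet_Ioi
        (hint0.mono_set Set.Ioc_subset_Ioi_self) (hint a ha)
      rw [Set.Ioc_union_Ioi_eq_Ioi ha.le] at h
      exact h
    rw [hsplit, add_sub_cancel_right]
    have h1 : ‖∫ y in Set.Ioc 0 a, g y‖ ≤ CB * (MeasureTheory.volume (Set.Ioc 0 a)).toReal := by
      apply MeasureTheory.norm_setIntegral_le_of_norm_le_const
      · simp [Real.volume_Ioc]
      · intro y hy
        exact hsmall y ⟨hy.1.le, le_trans hy.2 ha1⟩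
    rw [Real.volume_Ioc, sub_zero, ENNReal.toReal_ofReal ha.le] at h1
    exact h1
  constructor
  · refine ⟨∅, fun _ => 0, by simp, ?_⟩
    simp only [Finset.sum_empty, sub_zero]
    apply squeeze_zero_norm' (a := fun z => |Real.log z * z| * (CB / b))
    · filter_upwards [Ioc_mem_nhdsGT hb] with z hz
      have hz0 : (0:ℝ) < z := hz.1
      have hbz1 : (1:ℝ) ≤ b / z := (one_le_div hz0).mpr hz.2
      rw [norm_mul, Complex.norm_real, hIval z hz0]
      have h1 : ‖∫ y in Set.Ioi (b/z), g y‖ ≤ CB / (b/z) := htail _ hbz1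
      have h2 : CB / (b/z) = CB * z / b := by
        field_simp
      rw [abs_mul, abs_of_pos hz0]
      rw [h2] at h1
      calc ‖Real.log z‖ * ‖∫ y in Set.Ioi (b/z), g y‖
          ≤ ‖Real.log z‖ * (CB * z / b) := by
            apply mul_le_mul_of_nonneg_left h1 (norm_nonneg _)
        _ = |Real.log z| * z * (CB / b) := by
            rw [Real.norm_eq_abs]; ring
    · have h3 := (tendsto_log_mul_rpow_nhdsGT_zero one_pos).abs
      rw [abs_zero] at h3
      have h4 := h3.mul_const (CB / b)
      rw [zero_mul] at h4
      apply h4.congr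
      intro z
      rw [Real.rpow_one]
  · refine ⟨{((0:ℂ),1)}, fun _ => (∫ y in Set.Ioi 0, g y), ?_, ?_⟩
    · intro p hp
      simp only [Finset.mem_singleton] at hp
      subst hp
      refine ⟨le_refl 0, by simp⟩
    · simp only [Finset.sum_singleton]
      have hct : ∀ x : ℝ, CTerm ((0:ℂ),1) x = (Real.log x : ℂ) := by
        intro x
        rw [CTerm]
        simp [Complex.cpow_zero]
      apply squeeze_zero_norm' (a := fun z => |Real.log z / z| * (CB * b))
      · filter_upwards [Filter.eventually_ge_atTop (max b 1)] with z hz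
        have hz1 : (1:ℝ) ≤ z := le_trans (le_max_right b 1) hz
        have hz0 : (0:ℝ) < z := lt_of_lt_of_le one_pos hz1
        have hbz0 : 0 < b / z := div_pos hb hz0
        have hbz1 : b / z ≤ 1 := by
          rw [div_le_one hz0]; exact le_trans (le_max_left b 1) hz
        rw [hct z, sub_zero, hIval z hz0]
        have heq : (Real.log z : ℂ) * (∫ y in Set.Ioi (b/z), g y)
            - (∫ y in Set.Ioi 0, g y) * (Real.log z : ℂ)
            = -((Real.log z : ℂ) * ((∫ y in Set.Ioi 0, g y) - ∫ y in Set.Ioi (b/z), g y)) := by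
          ring
        rw [heq, norm_neg, norm_mul, Complex.norm_real]
        have h1 := hhead (b/z) hbz0 hbz1
        calc ‖Real.log z‖ * ‖(∫ y in Set.Ioi 0, g y) - ∫ y in Set.Ioi (b/z), g y‖
            ≤ ‖Real.log z‖ * (CB * (b/z)) := by
              apply mul_le_mul_of_nonneg_left h1 (norm_nonneg _)
          _ = |Real.log z / z| * (CB * b) := by
              rw [Real.norm_eq_abs, abs_div, abs_of_pos hz0,
                abs_of_nonneg (Real.log_nonneg hz1)]
              field_simp
      · have h3 := (Real.isLittleO_log_id_atTop.tendsto_div_nhds_zero).abs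
        rw [abs_zero] at h3
        have h4 := h3.mul_const (CB * b)
        rw [zero_mul] at h4
        exact h4
end

section
/- Inductive convolution estimate: Fix μ > 0, α, β ≥ 0, and let k₁(x,y) = μ^{-α} max(x,y)^β e^{-μ(x+y)} and k₂(x,y) = (μx + μ^{-1}) e^{-μ|x-y|}. Then the convolution ∫_0^1 k₁(x,z) k₂(z,y) dz is bounded by a finite sum Σ c_{α'β'} μ^{-α'} max(x,y)^{β'} e^{-μ(x+y)} over pairs (α', β') with α' + β' ≥ α + β + 1, with constants c_{α'β'} independent of μ ≥ μ₀ > 0 and of x, y ∈ [0,1]. -/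
/-!
With `t = (z - y)₊` the two exponentials combine to `e^{-μ(x+y)} e^{-2μt}`. Against the scale
`s = max x y + μ⁻¹` one has `max x z ≤ s (1 + μt)` and `μz + μ⁻¹ ≤ (1 + μ₀⁻¹) μ s (1 + μt)`, and
one factor `e^{-μt}` absorbs `(1 + μt)^{β+1}`. Since `∫₀¹ e^{-μt} dz ≤ y + μ⁻¹ ≤ s`, the convolution
is `≲ μ^{1-α} s^{β+2} e^{-μ(x+y)}`, and `s^{β+2} ≲ max x y ^ {β+2} + μ^{-(β+2)}` splits this into
two terms, both of weight `α + β + 1`.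
-/

open MeasureTheory Real Set
open scoped Nat

theorem Real.rpow_add_le_mul_rpow_add_rpow {a b p : ℝ} (ha : 0 ≤ a) (hb : 0 ≤ b) (hp : 1 ≤ p) :
    (a + b) ^ p ≤ 2 ^ (p - 1) * (a ^ p + b ^ p) := by
  lift a to NNReal using ha
  lift b to NNReal using hb
  exact_mod_cast NNReal.rpow_add_le_mul_rpow_add_rpow a b hp

lemma one_add_rpow_mul_exp_neg_le {p u : ℝ} (hu : 0 ≤ u) :
    (1 + u) ^ p * exp (-u) ≤ exp 1 * ⌈p⌉₊ ! := by
  set N := ⌈p⌉₊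
  have h1 : 1 ≤ 1 + u := by linarith
  calc (1 + u) ^ p * exp (-u) ≤ (1 + u) ^ N * exp (-u) := by
        gcongr
        rw [← rpow_natCast]
        exact rpow_le_rpow_of_exponent_le h1 (Nat.le_ceil p)
    _ ≤ N ! * exp (1 + u) * exp (-u) := by
        gcongr
        rw [← div_le_iff₀' (by positivity)]
        exact pow_div_factorial_le_exp _ (by linarith) N
    _ = exp 1 * N ! := by rw [mul_assoc, ← exp_add]; ring_nf

lemma integral_exp_neg_mul_sub_le {μ y b : ℝ} (hμ : 0 < μ) :
    ∫ z in y..b, exp (-μ * (z - y)) ≤ μ⁻¹ := by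
  have h := intervalIntegral.integral_comp_mul_sub (a := y) (b := b) exp
    (neg_ne_zero.mpr hμ.ne') (-μ * y)
  simp only [integral_exp] at h
  have : ∀ z, -μ * z - -μ * y = -μ * (z - y) := fun z => by ring
  simp only [this, sub_self, mul_zero, exp_zero, smul_eq_mul] at h
  rw [h, inv_neg, neg_mul, ← mul_neg, neg_sub]
  have := exp_pos (-μ * (b - y))
  have := inv_pos.mpr hμ
  nlinarith

lemma integral_exp_neg_mul_max_sub_le {μ a b y : ℝ} (hμ : 0 < μ) (hay : a ≤ y) (hyb : y ≤ b) :
    ∫ z in a..b, exp (-μ * max (z - y) 0) ≤ y - a + μ⁻¹ := by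
  have hint : ∀ c d, IntervalIntegrable (fun z => exp (-μ * max (z - y) 0)) volume c d :=
    fun c d => by apply Continuous.intervalIntegrable; fun_prop
  rw [← intervalIntegral.integral_add_adjacent_intervals (hint a y) (hint y b)]
  have hleft : ∫ z in a..y, exp (-μ * max (z - y) 0) = y - a := by
    rw [intervalIntegral.integral_congr (g := fun _ => (1 : ℝ)), intervalIntegral.integral_const,
      smul_eq_mul, mul_one]
    intro z hz
    rw [uIcc_of_le hay] at hz
    simp [max_eq_right (sub_nonpos.mpr hz.2)]
  have hright : ∫ z in y..b, exp (-μ * max (z - y) 0) = ∫ z in y..b, exp (-μ * (z - y)) := by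
    refine intervalIntegral.integral_congr fun z hz => ?_
    rw [uIcc_of_le hyb] at hz
    simp [max_eq_left (sub_nonneg.mpr hz.1)]
  rw [hleft, hright]
  linarith [integral_exp_neg_mul_sub_le (y := y) (b := b) hμ]

lemma exp_neg_mul_add_mul_exp_neg_mul_abs (μ x y z : ℝ) :
    exp (-μ * (x + z)) * exp (-μ * |z - y|)
      = exp (-μ * (x + y)) * exp (-(μ * max (z - y) 0)) * exp (-(μ * max (z - y) 0)) := by
  have h : z + |z - y| = y + 2 * max (z - y) 0 := by
    rcases le_total z y with h | h
    · rw [abs_of_nonpos (sub_nonpos.mpr h), max_eq_right (sub_nonpos.mpr h)]; ring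
    · rw [abs_of_nonneg (sub_nonneg.mpr h), max_eq_left (sub_nonneg.mpr h)]; ring
  rw [← exp_add, ← exp_add, ← exp_add]
  congr 1
  linear_combination -μ * h

lemma mul_add_inv_le_one_add_inv_mul {μ₀ μ z : ℝ} (hμ₀ : 0 < μ₀) (hμ : μ₀ ≤ μ) (hz : 0 ≤ z) :
    μ * z + μ⁻¹ ≤ (1 + μ₀⁻¹) * μ * (z + μ⁻¹) := by
  have hμpos : 0 < μ := hμ₀.trans_le hμ
  have : μ⁻¹ ≤ μ₀⁻¹ := inv_anti₀ hμ₀ hμ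
  have : 0 ≤ μ₀⁻¹ * (μ * z) := by positivity
  calc μ * z + μ⁻¹ ≤ (1 + μ₀⁻¹) * (μ * z + 1) := by linarith
    _ = (1 + μ₀⁻¹) * μ * (z + μ⁻¹) := by field_simp

lemma kernel_mul_kernel_le (α : ℝ) {μ₀ μ β x y z : ℝ} (hμ₀ : 0 < μ₀) (hμ : μ₀ ≤ μ)
    (hβ : 0 ≤ β) (hx : 0 ≤ x) (hz : 0 ≤ z) :
    (μ ^ (-α) * max x z ^ β * exp (-μ * (x + z))) * ((μ * z + μ⁻¹) * exp (-μ * |z - y|))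
      ≤ (1 + μ₀⁻¹) * (exp 1 * ⌈β + 1⌉₊ !) * μ ^ (-(α - 1)) * (max x y + μ⁻¹) ^ (β + 1)
          * exp (-μ * (x + y)) * exp (-μ * max (z - y) 0) := by
  have hμpos : 0 < μ := hμ₀.trans_le hμ
  set m := max x y
  set t := max (z - y) 0
  set u := μ * t
  set s := m + μ⁻¹
  have hm : 0 ≤ m := hx.trans (le_max_left x y)
  have hu : 0 ≤ u := mul_nonneg hμpos.le (le_max_right _ _)
  have hs : 0 ≤ s := by positivity
  have hshift : m + t + μ⁻¹ ≤ s * (1 + u) := by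
    have : t = μ⁻¹ * u := by simp only [u]; field_simp
    have : μ⁻¹ * u ≤ s * u := by gcongr; exact le_add_of_nonneg_left hm
    nlinarith
  have hzt : z ≤ m + t := by
    linarith [le_max_right x y, le_max_left (z - y) 0]
  have hmax : max x z ≤ s * (1 + u) := by
    refine le_trans (max_le ?_ hzt) (by linarith [inv_pos.mpr hμpos])
    linarith [le_max_left x y, le_max_right (z - y) 0]
  have hk₂ : μ * z + μ⁻¹ ≤ (1 + μ₀⁻¹) * μ * (s * (1 + u)) := by
    refine (mul_add_inv_le_one_add_inv_mul hμ₀ hμ hz).trans ?_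
    gcongr
    linarith
  have hpeak := one_add_rpow_mul_exp_neg_le (p := β + 1) hu
  rw [show -μ * max (z - y) 0 = -u by ring]
  calc (μ ^ (-α) * max x z ^ β * exp (-μ * (x + z))) * ((μ * z + μ⁻¹) * exp (-μ * |z - y|))
      = μ ^ (-α) * (max x z ^ β * (μ * z + μ⁻¹))
          * (exp (-μ * (x + y)) * exp (-u) * exp (-u)) := by
        rw [← exp_neg_mul_add_mul_exp_neg_mul_abs]; ring
    _ ≤ μ ^ (-α) * ((s * (1 + u)) ^ β * ((1 + μ₀⁻¹) * μ * (s * (1 + u))))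
          * (exp (-μ * (x + y)) * exp (-u) * exp (-u)) := by
        gcongr
    _ = (1 + μ₀⁻¹) * ((1 + u) ^ (β + 1) * exp (-u)) * (μ ^ (-α) * μ) * s ^ (β + 1)
          * exp (-μ * (x + y)) * exp (-u) := by
        rw [mul_rpow hs (by linarith), rpow_add_one' hs (by linarith),
          rpow_add_one' (by linarith) (by linarith)]
        ring
    _ ≤ (1 + μ₀⁻¹) * (exp 1 * ⌈β + 1⌉₊ !) * (μ ^ (-α) * μ) * s ^ (β + 1)
          * exp (-μ * (x + y)) * exp (-u) := by gcongr
    _ = _ := by rw [neg_sub', sub_neg_eq_add, rpow_add_one hμpos.ne']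

lemma integral_kernel_mul_kernel_le (α : ℝ) {μ₀ μ β x y : ℝ} (hμ₀ : 0 < μ₀) (hμ : μ₀ ≤ μ)
    (hβ : 0 ≤ β) (hx : 0 ≤ x) (hy : y ∈ Icc (0 : ℝ) 1) :
    ∫ z in (0 : ℝ)..1,
        (μ ^ (-α) * max x z ^ β * exp (-μ * (x + z))) * ((μ * z + μ⁻¹) * exp (-μ * |z - y|))
      ≤ (1 + μ₀⁻¹) * (exp 1 * ⌈β + 1⌉₊ !) * μ ^ (-(α - 1)) * (max x y + μ⁻¹) ^ (β + 2)
          * exp (-μ * (x + y)) := by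
  have hμpos : 0 < μ := hμ₀.trans_le hμ
  set s := max x y + μ⁻¹
  have hs : 0 < s := add_pos_of_nonneg_of_pos (hx.trans (le_max_left x y)) (inv_pos.mpr hμpos)
  set K := (1 + μ₀⁻¹) * (exp 1 * ⌈β + 1⌉₊ !) * μ ^ (-(α - 1)) * s ^ (β + 1)
    * exp (-μ * (x + y))
  have hK : 0 ≤ K := by positivity
  calc _ ≤ ∫ z in (0 : ℝ)..1, K * exp (-μ * max (z - y) 0) := by
        refine intervalIntegral.integral_mono_on zero_le_one ?_ ?_
          fun z hz => kernel_mul_kernel_le α hμ₀ hμ hβ hx hz.1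
        · apply Continuous.intervalIntegrable
          have := Real.continuous_rpow_const hβ
          fun_prop
        · apply Continuous.intervalIntegrable; fun_prop
    _ = K * ∫ z in (0 : ℝ)..1, exp (-μ * max (z - y) 0) := intervalIntegral.integral_const_mul _ _
    _ ≤ K * s := by
        gcongr
        refine (integral_exp_neg_mul_max_sub_le hμpos hy.1 hy.2).trans ?_
        linarith [le_max_right x y]
    _ = _ := by rw [show β + 2 = β + 1 + 1 by ring, rpow_add_one hs.ne']; ring

theorem stmt_19_general (μ₀ : ℝ) (hμ₀ : 0 < μ₀) (α β : ℝ) (hβ : 0 ≤ β) :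
    ∃ (n : ℕ) (α' β' c : Fin n → ℝ),
      (∀ i, α + β + 1 ≤ α' i + β' i) ∧
      ∀ μ : ℝ, μ₀ ≤ μ → ∀ x ∈ Set.Icc (0 : ℝ) 1, ∀ y ∈ Set.Icc (0 : ℝ) 1,
        (∫ z in (0 : ℝ)..1,
            (μ ^ (-α) * (max x z) ^ β * Real.exp (-μ * (x + z))) *
              ((μ * z + μ⁻¹) * Real.exp (-μ * |z - y|)))
          ≤ ∑ i, c i * μ ^ (-(α' i)) * (max x y) ^ (β' i) * Real.exp (-μ * (x + y)) := by
  set K := (1 + μ₀⁻¹) * (exp 1 * ⌈β + 1⌉₊ !) * 2 ^ (β + 1)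
  refine ⟨2, ![α - 1, α + β + 1], ![β + 2, 0], ![K, K], ?_, ?_⟩
  · simp only [Fin.forall_fin_two, Matrix.cons_val_zero, Matrix.cons_val_one]
    constructor <;> linarith
  rintro μ hμ x ⟨hx, -⟩ y hy
  have hμpos : 0 < μ := hμ₀.trans_le hμ
  have hsplit := Real.rpow_add_le_mul_rpow_add_rpow (le_max_of_le_left hx : 0 ≤ max x y)
    (inv_pos.mpr hμpos).le (by linarith : 1 ≤ β + 2)
  rw [inv_rpow hμpos.le, ← rpow_neg hμpos.le, show β + 2 - 1 = β + 1 by ring] at hsplit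
  refine (integral_kernel_mul_kernel_le α hμ₀ hμ hβ hx hy).trans ?_
  have hμα : μ ^ (-(α + β + 1)) = μ ^ (-(α - 1)) * μ ^ (-(β + 2)) := by
    rw [← rpow_add hμpos]; ring_nf
  simp only [Fin.sum_univ_two, Matrix.cons_val_zero, Matrix.cons_val_one, rpow_zero, hμα, K]
  calc _ ≤ (1 + μ₀⁻¹) * (exp 1 * ⌈β + 1⌉₊ !) * μ ^ (-(α - 1))
          * (2 ^ (β + 1) * (max x y ^ (β + 2) + μ ^ (-(β + 2)))) * exp (-μ * (x + y)) := by
        gcongr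
    _ = _ := by ring

/-- Inductive convolution estimate: for `k₁(x,y) = μ^{-α} max(x,y)^β e^{-μ(x+y)}` and
`k₂(x,y) = (μx + μ⁻¹) e^{-μ|x-y|}`, the convolution `∫_0^1 k₁(x,z) k₂(z,y) dz` is bounded
by a finite sum `∑ c_i μ^{-α'_i} max(x,y)^{β'_i} e^{-μ(x+y)}` with `α'_i + β'_i ≥ α+β+1`,
the constants being independent of `μ ≥ μ₀` and of `x, y ∈ [0,1]`. -/
theorem stmt_19 (μ₀ : ℝ) (hμ₀ : 0 < μ₀) (α β : ℝ) (hα : 0 ≤ α) (hβ : 0 ≤ β) :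
    ∃ (n : ℕ) (α' β' c : Fin n → ℝ),
      (∀ i, α + β + 1 ≤ α' i + β' i) ∧
      ∀ μ : ℝ, μ₀ ≤ μ → ∀ x ∈ Set.Icc (0 : ℝ) 1, ∀ y ∈ Set.Icc (0 : ℝ) 1,
        (∫ z in (0 : ℝ)..1,
            (μ ^ (-α) * (max x z) ^ β * Real.exp (-μ * (x + z))) *
              ((μ * z + μ⁻¹) * Real.exp (-μ * |z - y|)))
          ≤ ∑ i, c i * μ ^ (-(α' i)) * (max x y) ^ (β' i) * Real.exp (-μ * (x + y)) :=
  stmt_19_general μ₀ hμ₀ α β hβ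
end
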